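/- arXiv:2208.10910 — 3 statements merged into one kernel-verified Lean document; each statement's English description precedes it below -/
import Mathlib

section
/- For the truncated normal distribution on [-t, t] with location parameter μ and scale s > 0, the derivative of the expected value with respect to μ equals the variance divided by s², and in particular is positive; hence the expected value is strictly increasing in μ. -/
open MeasureTheory Real

/-- Gaussian density with mean `μ` and variance `v`. -/
noncomputable def gauss (μ v x : ℝ) : ℝ :=
  (Real.sqrt (2 * Real.pi * v))⁻¹ * Real.exp (-(x - μ)^2 / (2 * v))

/-- Mean of the normal distribution `N(μ, s²)` truncated to `[-t, t]`. -/
noncomputable def truncMean (t s μ : ℝ) : ℝ :=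
  (∫ x in Set.Icc (-t) t, x * gauss μ (s^2) x) /
    (∫ x in Set.Icc (-t) t, gauss μ (s^2) x)

/-- Variance of the normal distribution `N(μ, s²)` truncated to `[-t, t]`. -/
noncomputable def truncVar (t s μ : ℝ) : ℝ :=
  (∫ x in Set.Icc (-t) t, (x - truncMean t s μ)^2 * gauss μ (s^2) x) /
    (∫ x in Set.Icc (-t) t, gauss μ (s^2) x)

/-!
The Gaussian family is an exponential family in its mean:
`∂_μ gauss μ v x = (x - μ) / v * gauss μ v x`. Differentiating under the integral sign over the
compact interval `[-t, t]` therefore gives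
`d/dμ ∫ f · gauss μ v = (∫ x f · gauss μ v - μ ∫ f · gauss μ v) / v`. Writing `Z, M₁, M₂` for the
truncated moments of order `0, 1, 2`, the quotient rule applied to the truncated mean `M₁ / Z`
leaves `(Z M₂ - M₁²) / (v Z²)`, which is the truncated variance divided by `v = s²`. The variance
is positive because `(x - m)² · gauss` is continuous, nonnegative and not identically zero on
`[-t, t]`.
-/

open Set

theorem hasDerivAt_setIntegral_of_continuous {α : Type*} [TopologicalSpace α] [T2Space α]
    [MeasurableSpace α] [OpensMeasurableSpace α] {μ : Measure α} [IsFiniteMeasureOnCompacts μ]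
    {K : Set α} (hK : IsCompact K)
    {F F' : ℝ → α → ℝ} (hF : Continuous (Function.uncurry F))
    (hF' : Continuous (Function.uncurry F'))
    (hderiv : ∀ θ x, HasDerivAt (F · x) (F' θ x) θ) (θ₀ : ℝ) :
    HasDerivAt (fun θ => ∫ x in K, F θ x ∂μ) (∫ x in K, F' θ₀ x ∂μ) θ₀ := by
  obtain ⟨C, hC⟩ := (isCompact_closedBall θ₀ 1 |>.prod hK).exists_bound_of_continuousOn
    hF'.continuousOn
  have : IsFiniteMeasure (μ.restrict K) := isFiniteMeasure_restrict.2 hK.measure_lt_top.ne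
  refine (hasDerivAt_integral_of_dominated_loc_of_deriv_le (bound := fun _ => C)
    (Metric.closedBall_mem_nhds θ₀ one_pos)
    (.of_forall fun θ => (hF.comp (Continuous.prodMk_right θ)).aestronglyMeasurable)
    ((hF.comp (Continuous.prodMk_right θ₀)).continuousOn.integrableOn_compact hK)
    (hF'.comp (Continuous.prodMk_right θ₀)).aestronglyMeasurable ?_ (integrable_const C)
    (.of_forall fun x θ _ => hderiv θ x)).2
  filter_upwards [ae_restrict_mem hK.measurableSet] with x hx θ hθ
  exact hC (θ, x) ⟨hθ, hx⟩

theorem hasDerivAt_gauss_mean (v x μ : ℝ) :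
    HasDerivAt (fun μ => gauss μ v x) ((x - μ) / v * gauss μ v x) μ := by
  have hexp : HasDerivAt (fun μ => -(x - μ) ^ 2 / (2 * v)) ((x - μ) / v) μ := by
    convert! (((hasDerivAt_id' μ).const_sub x).fun_pow 2).neg.div_const (2 * v) using 1
    ring
  convert! hexp.exp.const_mul (√(2 * π * v))⁻¹ using 1
  unfold gauss
  ring

theorem continuous_uncurry_gauss (v : ℝ) : Continuous fun p : ℝ × ℝ => gauss p.1 v p.2 := by
  unfold gauss; fun_prop

@[fun_prop]
theorem continuous_gauss (μ v : ℝ) : Continuous (gauss μ v) :=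
  (continuous_uncurry_gauss v).comp (Continuous.prodMk_right μ)

theorem gauss_pos {v : ℝ} (hv : 0 < v) (μ x : ℝ) : 0 < gauss μ v x := by
  unfold gauss; positivity

theorem hasDerivAt_setIntegral_mul_gauss {K : Set ℝ} (hK : IsCompact K) {f : ℝ → ℝ}
    (hf : Continuous f) (v μ : ℝ) :
    HasDerivAt (fun μ => ∫ x in K, f x * gauss μ v x)
      (∫ x in K, f x * ((x - μ) / v * gauss μ v x)) μ :=
  hasDerivAt_setIntegral_of_continuous hK
    (by have := continuous_uncurry_gauss v; fun_prop)
    (by have := continuous_uncurry_gauss v; fun_prop)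
    (fun μ x => (hasDerivAt_gauss_mean v x μ).const_mul (f x)) μ

theorem setIntegral_quadratic_mul {K : Set ℝ} (hK : IsCompact K) {w : ℝ → ℝ} (hw : Continuous w)
    (a b c : ℝ) :
    ∫ x in K, (a * x ^ 2 + b * x + c) * w x
      = a * (∫ x in K, x ^ 2 * w x) + b * (∫ x in K, x * w x) + c * ∫ x in K, w x := by
  have hint : ∀ {g : ℝ → ℝ}, Continuous g → IntegrableOn g K :=
    fun hg => hg.continuousOn.integrableOn_compact hK
  simp only [add_mul, mul_assoc]
  rw [integral_add (hint (by fun_prop)) (hint (by fun_prop)),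
    integral_add (hint (by fun_prop)) (hint (by fun_prop)),
    integral_const_mul, integral_const_mul, integral_const_mul]

theorem setIntegral_Icc_pos {a b : ℝ} (hab : a < b) {f : ℝ → ℝ} (hf : Continuous f)
    (hf_nonneg : ∀ x, 0 ≤ f x) (hpos : ∃ c ∈ Icc a b, 0 < f c) :
    0 < ∫ x in Icc a b, f x := by
  rw [integral_Icc_eq_integral_Ioc, ← intervalIntegral.integral_of_le hab.le]
  exact intervalIntegral.integral_pos hab hf.continuousOn (fun x _ => hf_nonneg x) hpos

section TruncatedNormal

variable {t s : ℝ}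

theorem setIntegral_gauss_pos (ht : 0 < t) (hs : s ≠ 0) (μ : ℝ) :
    0 < ∫ x in Icc (-t) t, gauss μ (s ^ 2) x :=
  setIntegral_Icc_pos (by linarith) (continuous_gauss μ _)
    (fun x => (gauss_pos (by positivity) μ x).le)
    ⟨t, ⟨by linarith, le_rfl⟩, gauss_pos (by positivity) μ t⟩

theorem truncVar_pos (ht : 0 < t) (hs : s ≠ 0) (μ : ℝ) : 0 < truncVar t s μ := by
  set m := truncMean t s μ
  obtain ⟨c, hc, hcm⟩ : ∃ c ∈ Icc (-t) t, c ≠ m := by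
    rcases eq_or_ne m t with h | h
    · exact ⟨-t, ⟨le_rfl, by linarith⟩, by linarith⟩
    · exact ⟨t, ⟨by linarith, le_rfl⟩, h.symm⟩
  refine div_pos (setIntegral_Icc_pos (by linarith) (by fun_prop)
    (fun x => mul_nonneg (sq_nonneg _) (gauss_pos (by positivity) μ x).le) ⟨c, hc, ?_⟩)
    (setIntegral_gauss_pos ht hs μ)
  exact mul_pos (sq_pos_of_ne_zero (sub_ne_zero.2 hcm)) (gauss_pos (by positivity) μ c)

theorem hasDerivAt_truncMean (ht : 0 < t) (hs : s ≠ 0) (μ : ℝ) :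
    HasDerivAt (truncMean t s) (truncVar t s μ / s ^ 2) μ := by
  have hK : IsCompact (Icc (-t) t) := isCompact_Icc
  have quadratic := setIntegral_quadratic_mul hK (continuous_gauss μ (s ^ 2))
  have hZpos := setIntegral_gauss_pos ht hs μ
  set Z := ∫ x in Icc (-t) t, gauss μ (s ^ 2) x
  set M₁ := ∫ x in Icc (-t) t, x * gauss μ (s ^ 2) x
  set M₂ := ∫ x in Icc (-t) t, x ^ 2 * gauss μ (s ^ 2) x
  have hZ : HasDerivAt (fun μ => ∫ x in Icc (-t) t, gauss μ (s ^ 2) x)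
      ((M₁ - μ * Z) / s ^ 2) μ := by
    have h := hasDerivAt_setIntegral_mul_gauss hK (f := fun _ => 1) continuous_const (s ^ 2) μ
    simp only [one_mul] at h
    refine h.congr_deriv ?_
    calc _ = ∫ x in Icc (-t) t, (0 * x ^ 2 + (s ^ 2)⁻¹ * x + -μ / s ^ 2) * gauss μ (s ^ 2) x := by
          congr 1; funext x; ring
      _ = _ := by rw [quadratic]; ring
  have hM₁ : HasDerivAt (fun μ => ∫ x in Icc (-t) t, x * gauss μ (s ^ 2) x)
      ((M₂ - μ * M₁) / s ^ 2) μ := by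
    refine (hasDerivAt_setIntegral_mul_gauss hK continuous_id (s ^ 2) μ).congr_deriv ?_
    calc _ = ∫ x in Icc (-t) t, ((s ^ 2)⁻¹ * x ^ 2 + -μ / s ^ 2 * x + 0) * gauss μ (s ^ 2) x := by
          congr 1; funext x; simp only [id]; ring
      _ = _ := by rw [quadratic]; ring
  have hvar : ∫ x in Icc (-t) t, (x - M₁ / Z) ^ 2 * gauss μ (s ^ 2) x
      = M₂ - 2 * (M₁ / Z) * M₁ + (M₁ / Z) ^ 2 * Z := by
    calc _ = ∫ x in Icc (-t) t,
            (1 * x ^ 2 + -2 * (M₁ / Z) * x + (M₁ / Z) ^ 2) * gauss μ (s ^ 2) x := by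
          congr 1; funext x; ring
      _ = _ := by rw [quadratic]; ring
  refine (hM₁.div hZ hZpos.ne').congr_deriv ?_
  change ((M₂ - μ * M₁) / s ^ 2 * Z - M₁ * ((M₁ - μ * Z) / s ^ 2)) / Z ^ 2
    = (∫ x in Icc (-t) t, (x - M₁ / Z) ^ 2 * gauss μ (s ^ 2) x) / Z / s ^ 2
  rw [hvar]
  field_simp
  ring

end TruncatedNormal

/-- For the truncated normal distribution on `[-t, t]` with location
parameter `μ` and scale `s > 0`, the derivative of the expected value with
respect to `μ` equals the variance divided by `s²`, and in particular is
positive; hence the expected value is strictly increasing in `μ`. -/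
theorem stmt_1 (t s : ℝ) (ht : 0 < t) (hs : 0 < s) :
    (∀ μ : ℝ, HasDerivAt (truncMean t s) (truncVar t s μ / s^2) μ ∧
      0 < truncVar t s μ / s^2) ∧
    StrictMono (truncMean t s) := by
  have hderiv := hasDerivAt_truncMean ht hs.ne'
  have hpos : ∀ μ, 0 < truncVar t s μ / s ^ 2 :=
    fun μ => div_pos (truncVar_pos ht hs.ne' μ) (by positivity)
  exact ⟨fun μ => ⟨hderiv μ, hpos μ⟩,
    strictMono_of_deriv_pos fun μ => (hderiv μ).deriv ▸ hpos μ⟩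
end

section
/- Tweedie's formula: in the normal means model with observation y ~ N(b, σ²) and prior b ~ f, the posterior mean satisfies E[b | y] = y + σ²·(d/dy) log p(y), where p(y) = ∫ N(y; b, σ²) f(b) db is the marginal density. -/
/-!
Completing the square gives `N(y; b, v) = N(y; 0, v) · exp (y b / v) · exp (-b² / 2v)`, so the
marginal is `p(y) = N(y; 0, v) · M(y / v)`, where `M` is the moment generating function of the
measure `μ = exp (-b² / 2v) f(b) db`. Since `p ≠ 0` near `y`, the point `y / v` is interior to the
set where `M` is finite, hence `M` is differentiable there with `M'(t) = ∫ b exp (t b) dμ`. This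
gives `v p'(y) = ∫ b N(y; b, v) f(b) db - y p(y)`, and dividing by `p(y)` gives the formula.
-/

open MeasureTheory Real

open ProbabilityTheory Filter Topology

theorem gauss_eq_gauss_zero_mul (b v y : ℝ) :
    gauss b v y = gauss 0 v y * (exp (y / v * b) * exp (-b ^ 2 / (2 * v))) := by
  simp only [gauss, sub_zero, mul_assoc, ← exp_add]
  congr 2
  ring

theorem gauss_zero_pos {v : ℝ} (hv : 0 < v) (y : ℝ) : 0 < gauss 0 v y := by
  unfold gauss; positivity

theorem hasDerivAt_gauss_zero (v y : ℝ) : HasDerivAt (gauss 0 v) (-(y / v) * gauss 0 v y) y := by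
  have h : HasDerivAt (fun y => -(y - 0) ^ 2 / (2 * v)) (-(y / v)) y := by
    refine ((((hasDerivAt_id y).sub_const 0).pow 2).neg.div_const (2 * v)).congr_deriv ?_
    simp only [id, sub_zero]
    ring
  refine (h.exp.const_mul (√(2 * π * v))⁻¹).congr_deriv ?_
  rw [gauss]
  ring

section
variable {α : Type*} [MeasurableSpace α] {μ : Measure α} {w : α → ℝ}

theorem integral_withDensity_ofReal (hw : AEMeasurable w μ) (hw0 : ∀ x, 0 ≤ w x) (g : α → ℝ) :
    ∫ x, g x ∂μ.withDensity (fun x => ENNReal.ofReal (w x)) = ∫ x, w x * g x ∂μ := by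
  rw [integral_withDensity_eq_integral_toReal_smul₀ hw.ennreal_ofReal
    (Eventually.of_forall fun _ => ENNReal.ofReal_lt_top)]
  simp only [ENNReal.toReal_ofReal (hw0 _), smul_eq_mul]

theorem integrable_withDensity_ofReal_iff (hw : AEMeasurable w μ) (hw0 : ∀ x, 0 ≤ w x)
    {g : α → ℝ} :
    Integrable g (μ.withDensity (fun x => ENNReal.ofReal (w x))) ↔
      Integrable (fun x => w x * g x) μ := by
  rw [integrable_withDensity_iff_integrable_smul₀' hw.ennreal_ofReal
    (Eventually.of_forall fun _ => ENNReal.ofReal_lt_top)]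
  simp only [ENNReal.toReal_ofReal (hw0 _), smul_eq_mul]
end

noncomputable def gaussWeightedPrior (v : ℝ) (f : ℝ → ℝ) : Measure ℝ :=
  volume.withDensity fun b => ENNReal.ofReal (exp (-b ^ 2 / (2 * v)) * f b)

section
variable {v : ℝ} {f : ℝ → ℝ}

theorem integral_gaussWeightedPrior (hf : AEMeasurable f) (hf0 : ∀ b, 0 ≤ f b) (g : ℝ → ℝ) :
    ∫ b, g b ∂gaussWeightedPrior v f = ∫ b, exp (-b ^ 2 / (2 * v)) * f b * g b :=
  integral_withDensity_ofReal (by fun_prop) (fun b => mul_nonneg (exp_pos _).le (hf0 b)) g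

theorem integral_gauss_mul_eq_mgf (hf : AEMeasurable f) (hf0 : ∀ b, 0 ≤ f b) (y : ℝ) :
    ∫ b, gauss b v y * f b = gauss 0 v y * mgf id (gaussWeightedPrior v f) (y / v) := by
  rw [mgf, integral_gaussWeightedPrior hf hf0, ← integral_const_mul]
  congr 1 with b
  rw [gauss_eq_gauss_zero_mul, id]
  ring

theorem integral_mul_gauss_mul_eq (hf : AEMeasurable f) (hf0 : ∀ b, 0 ≤ f b) (y : ℝ) :
    ∫ b, b * (gauss b v y * f b) =
      gauss 0 v y * ∫ b, b * exp (y / v * b) ∂gaussWeightedPrior v f := by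
  rw [integral_gaussWeightedPrior hf hf0, ← integral_const_mul]
  congr 1 with b
  rw [gauss_eq_gauss_zero_mul]
  ring

theorem integrable_gauss_mul_iff (hf : AEMeasurable f) (hf0 : ∀ b, 0 ≤ f b) (hv : 0 < v)
    (y : ℝ) :
    Integrable (fun b => gauss b v y * f b) ↔
      y / v ∈ integrableExpSet id (gaussWeightedPrior v f) := by
  have h : (fun b => gauss b v y * f b) =
      fun b => gauss 0 v y * (exp (-b ^ 2 / (2 * v)) * f b * exp (y / v * id b)) := by
    ext b
    rw [gauss_eq_gauss_zero_mul, id]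
    ring
  rw [integrableExpSet, Set.mem_ofPred_eq, gaussWeightedPrior,
    integrable_withDensity_ofReal_iff (by fun_prop) (fun b => mul_nonneg (exp_pos _).le (hf0 b)),
    h, integrable_const_mul_iff (gauss_zero_pos hv y).ne'.isUnit]

theorem div_mem_interior_integrableExpSet (hf : AEMeasurable f) (hf0 : ∀ b, 0 ≤ f b)
    (hv : 0 < v) {y : ℝ} (h : ∀ᶠ y' in 𝓝 y, ∫ b, gauss b v y' * f b ≠ 0) :
    y / v ∈ interior (integrableExpSet id (gaussWeightedPrior v f)) := by
  have hmul : Tendsto (· * v) (𝓝 (y / v)) (𝓝 y) := by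
    simpa [div_mul_cancel₀ y hv.ne'] using (continuous_mul_const v).tendsto (y / v)
  rw [mem_interior_iff_mem_nhds]
  filter_upwards [hmul.eventually h] with t ht
  rw [← mul_div_cancel_right₀ t hv.ne', ← integrable_gauss_mul_iff hf hf0 hv]
  exact Integrable.of_integral_ne_zero ht

theorem hasDerivAt_integral_gauss_mul (hf : AEMeasurable f) (hf0 : ∀ b, 0 ≤ f b) {y : ℝ}
    (h : y / v ∈ interior (integrableExpSet id (gaussWeightedPrior v f))) :
    HasDerivAt (fun y' => ∫ b, gauss b v y' * f b)
      ((∫ b, b * (gauss b v y * f b)) / v - y / v * ∫ b, gauss b v y * f b) y := by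
  have hmgf := (hasDerivAt_mgf h).comp y ((hasDerivAt_id y).div_const v)
  simp only [integral_gauss_mul_eq_mgf hf hf0, integral_mul_gauss_mul_eq hf hf0]
  refine ((hasDerivAt_gauss_zero v y).mul hmgf).congr_deriv ?_
  simp only [Function.comp_apply, id]
  ring

end

theorem stmt_2_general (σ2 : ℝ) (hσ2 : 0 < σ2) (f : ℝ → ℝ)
    (hf_nonneg : ∀ b, 0 ≤ f b) (hf_int : ∫ b : ℝ, f b = 1)
    (p : ℝ → ℝ) (hp : ∀ y, p y = ∫ b : ℝ, gauss b σ2 y * f b)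
    (y : ℝ) (hpos : 0 < p y)
    (hdiff : DifferentiableAt ℝ p y) :
    (∫ b : ℝ, b * (gauss b σ2 y * f b)) / p y =
      y + σ2 * deriv (fun y' => Real.log (p y')) y := by
  have hf : AEMeasurable f := (integrable_of_integral_eq_one hf_int).aemeasurable
  have hp_ne : ∀ᶠ y' in 𝓝 y, ∫ b, gauss b σ2 y' * f b ≠ 0 := by
    simpa only [hp] using hdiff.continuousAt.eventually_ne hpos.ne'
  have hderiv := hasDerivAt_integral_gauss_mul hf hf_nonneg
    (div_mem_interior_integrableExpSet hf hf_nonneg hσ2 hp_ne)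
  rw [← funext hp, ← hp] at hderiv
  rw [(hderiv.log hpos.ne').deriv]
  field_simp
  ring

/-- Tweedie's formula: in the normal means model `y ~ N(b, σ²)`
with prior density `f`, the posterior mean satisfies
`E[b | y] = y + σ²·(d/dy) log p(y)` where `p(y) = ∫ N(y; b, σ²) f(b) db` is the
marginal density. -/
theorem stmt_2 (σ2 : ℝ) (hσ2 : 0 < σ2) (f : ℝ → ℝ)
    (hf_nonneg : ∀ b, 0 ≤ f b) (hf_int : ∫ b : ℝ, f b = 1)
    (p : ℝ → ℝ) (hp : ∀ y, p y = ∫ b : ℝ, gauss b σ2 y * f b)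
    (y : ℝ) (hpos : 0 < p y)
    (hnum : Integrable fun b : ℝ => b * (gauss b σ2 y * f b))
    (hdiff : DifferentiableAt ℝ p y) :
    (∫ b : ℝ, b * (gauss b σ2 y * f b)) / p y =
      y + σ2 * deriv (fun y' => Real.log (p y')) y :=
  stmt_2_general σ2 hσ2 f hf_nonneg hf_int p hp y hpos hdiff
end

section
/- Let p_post be the normal means posterior given observation y, and for q a probability distribution on ℝ let F(q) = E_q[log N(y; b, s²)] − D_KL(q ∥ prior). Then the function h(b̄) = −max_{q: E_q[b]=b̄} F(q) can be written as h(b̄) = (1/(2s²))(y − b̄)² + (1/s²)ρ(b̄), where ρ(b̄) = min_{q: E_q[b]=b̄} [ (s²/2)log(2πs²) + (1/2)Var_q(b) + s²·D_KL(q ∥ prior) ]. -/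
open MeasureTheory Real

/-- Kullback–Leibler divergence between two densities on `ℝ`. -/
noncomputable def klDivDens (q f : ℝ → ℝ) : ℝ :=
  ∫ x : ℝ, q x * Real.log (q x / f x)

/-- `q` is a probability density on `ℝ` with finite second moment and mean `m`. -/
def IsDensWithMean (q : ℝ → ℝ) (m : ℝ) : Prop :=
  (∀ x, 0 ≤ q x) ∧ Integrable q ∧ (∫ x : ℝ, q x) = 1 ∧
    Integrable (fun x => x * q x) ∧ Integrable (fun x => x^2 * q x) ∧
    (∫ x : ℝ, x * q x) = m

/-- Variance of a density `q` with mean `m`. -/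
noncomputable def varDens (q : ℝ → ℝ) (m : ℝ) : ℝ :=
  ∫ x : ℝ, (x - m)^2 * q x

/-- ELBO for the single-observation normal means model with observation `y`,
noise variance `s2` and prior density `f`, evaluated at the density `q`. -/
noncomputable def elboNM (y s2 : ℝ) (f q : ℝ → ℝ) : ℝ :=
  (∫ b : ℝ, q b * Real.log (gauss b s2 y)) - klDivDens q f

/- ### Auxiliary lemmas -/

lemma exp_integrable : Integrable (fun u : ℝ => Real.exp (-u^2/2)) := by
  have h := integrable_exp_neg_mul_sq (show (0:ℝ) < 1/2 by norm_num)
  refine h.congr (Filter.Eventually.of_forall fun u => ?_)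
  ring_nf

lemma exp_integrable1 : Integrable (fun u : ℝ => u * Real.exp (-u^2/2)) := by
  have h := integrable_rpow_mul_exp_neg_mul_sq (show (0:ℝ) < 1/2 by norm_num)
    (show (-1:ℝ) < 1 by norm_num)
  refine h.congr (Filter.Eventually.of_forall fun u => ?_)
  simp only [Real.rpow_one]
  ring_nf

lemma exp_integrable2 : Integrable (fun u : ℝ => u^2 * Real.exp (-u^2/2)) := by
  have h := integrable_rpow_mul_exp_neg_mul_sq (show (0:ℝ) < 1/2 by norm_num)
    (show (-1:ℝ) < 2 by norm_num)
  refine h.congr (Filter.Eventually.of_forall fun u => ?_)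
  simp only [Real.rpow_two, Real.rpow_natCast]
  ring_nf

lemma exp_odd_integral : ∫ u : ℝ, u * Real.exp (-u^2/2) = 0 := by
  have h1 := integral_neg_eq_self (fun v : ℝ => v * Real.exp (-v^2/2)) (volume : Measure ℝ)
  simp only [neg_sq, neg_mul] at h1
  rw [integral_neg] at h1
  linarith

lemma gauss_one_eq (bbar : ℝ) :
    gauss bbar 1 = fun x => (Real.sqrt (2 * Real.pi))⁻¹ * Real.exp (-(x - bbar)^2/2) := by
  funext x
  simp [gauss]

/-- The Gaussian with unit variance and mean `bbar` is a valid density with mean `bbar`. -/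
lemma gauss_isDens (bbar : ℝ) : IsDensWithMean (gauss bbar 1) bbar := by
  set C : ℝ := (Real.sqrt (2 * Real.pi))⁻¹ with hC
  have hCpos : 0 < C := by
    rw [hC]
    positivity
  have hgeq := gauss_one_eq bbar
  have hpdf : gauss bbar 1 = ProbabilityTheory.gaussianPDFReal bbar 1 := by
    funext x
    rw [hgeq, ProbabilityTheory.gaussianPDFReal]
    push_cast
    rw [mul_one]
    congr 1
    ring_nf
  have hint : Integrable (gauss bbar 1) := by
    rw [hpdf]; exact ProbabilityTheory.integrable_gaussianPDFReal bbar 1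
  have hone : (∫ x : ℝ, gauss bbar 1 x) = 1 := by
    rw [hpdf]; exact ProbabilityTheory.integral_gaussianPDFReal_eq_one bbar one_ne_zero
  -- first moment integrability
  have hint1 : Integrable (fun x => x * gauss bbar 1 x) := by
    have hg : Integrable (fun u : ℝ => C * (u * Real.exp (-u^2/2))
        + (bbar * C) * Real.exp (-u^2/2)) :=
      (exp_integrable1.const_mul C).add (exp_integrable.const_mul (bbar * C))
    have := hg.comp_sub_right bbar
    refine this.congr (Filter.Eventually.of_forall fun x => ?_)
    rw [hgeq]
    ring
  have hint2 : Integrable (fun x => x^2 * gauss bbar 1 x) := by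
    have hg : Integrable (fun u : ℝ => C * (u^2 * Real.exp (-u^2/2))
        + (2 * bbar * C) * (u * Real.exp (-u^2/2)) + (bbar^2 * C) * Real.exp (-u^2/2)) :=
      ((exp_integrable2.const_mul C).add (exp_integrable1.const_mul (2 * bbar * C))).add
        (exp_integrable.const_mul (bbar^2 * C))
    have := hg.comp_sub_right bbar
    refine this.congr (Filter.Eventually.of_forall fun x => ?_)
    rw [hgeq]
    ring
  -- value of the normalization after shift
  have hshift : (∫ u : ℝ, C * Real.exp (-u^2/2)) = 1 := by
    have h := integral_sub_right_eq_self (μ := (volume : Measure ℝ))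
      (fun u : ℝ => C * Real.exp (-u^2/2)) bbar
    rw [← hone]
    rw [← h]
    congr 1
    funext x
    rw [hgeq]
  have hmean : (∫ x : ℝ, x * gauss bbar 1 x) = bbar := by
    have h := integral_sub_right_eq_self (μ := (volume : Measure ℝ))
      (fun u : ℝ => C * (u * Real.exp (-u^2/2)) + bbar * (C * Real.exp (-u^2/2))) bbar
    have heq : (fun x : ℝ => C * ((x - bbar) * Real.exp (-(x - bbar)^2/2))
        + bbar * (C * Real.exp (-(x - bbar)^2/2))) = fun x => x * gauss bbar 1 x := by
      funext x
      rw [hgeq]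
      ring
    rw [← heq]
    have h2 : (∫ u : ℝ, C * (u * Real.exp (-u^2/2)) + bbar * (C * Real.exp (-u^2/2)))
        = C * (∫ u : ℝ, u * Real.exp (-u^2/2)) + bbar * (∫ u : ℝ, C * Real.exp (-u^2/2)) := by
      rw [integral_add (exp_integrable1.const_mul C)
        ((exp_integrable.const_mul C).const_mul bbar), integral_const_mul, integral_const_mul]
    calc (∫ x : ℝ, C * ((x - bbar) * Real.exp (-(x - bbar)^2/2))
          + bbar * (C * Real.exp (-(x - bbar)^2/2))) =
        ∫ u : ℝ, C * (u * Real.exp (-u^2/2)) + bbar * (C * Real.exp (-u^2/2)) := h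
      _ = C * (∫ u : ℝ, u * Real.exp (-u^2/2)) + bbar * (∫ u : ℝ, C * Real.exp (-u^2/2)) := h2
      _ = bbar := by rw [exp_odd_integral, hshift]; ring
  exact ⟨fun x => by rw [hgeq]; positivity, hint, hone, hint1, hint2, hmean⟩

/-- KL divergence (with junk-value conventions) is bounded below by `-1`. -/
lemma klDivDens_ge (f q : ℝ → ℝ) (hf0 : ∀ x, 0 ≤ f x) (hfi : Integrable f)
    (hf1 : (∫ x : ℝ, f x) = 1) (hq0 : ∀ x, 0 ≤ q x) : -1 ≤ klDivDens q f := by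
  unfold klDivDens
  by_cases h : Integrable (fun x => q x * Real.log (q x / f x))
  · have hpt : ∀ x, -f x ≤ q x * Real.log (q x / f x) := by
      intro x
      rcases eq_or_lt_of_le (hf0 x) with hf | hf
      · rw [← hf]
        simp
      rcases eq_or_lt_of_le (hq0 x) with hq | hq
      · rw [← hq]
        simp
        linarith [hf0 x]
      · have hlog : Real.log (f x / q x) ≤ f x / q x - 1 :=
          Real.log_le_sub_one_of_pos (by positivity)
        have hinv : Real.log (q x / f x) = -Real.log (f x / q x) := by
          rw [← Real.log_inv]
          congr 1
          rw [inv_div]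
        have h2 : q x * Real.log (f x / q x) ≤ q x * (f x / q x - 1) :=
          mul_le_mul_of_nonneg_left hlog hq.le
        have h3 : q x * (f x / q x - 1) = f x - q x := by field_simp
        rw [hinv]
        nlinarith
    have hm := integral_mono hfi.neg h (fun x => hpt x)
    simp only [Pi.neg_apply] at hm
    rw [integral_neg, hf1] at hm
    linarith
  · rw [integral_undef h]
    norm_num

/-- The key algebraic identity for the ELBO. -/
lemma elbo_decomp (s2 y bbar : ℝ) (hs2 : 0 < s2) (f q : ℝ → ℝ)
    (hq : IsDensWithMean q bbar) :
    elboNM y s2 f q = -((1 / (2 * s2)) * (y - bbar)^2)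
      - (1 / s2) * (s2 / 2 * Real.log (2 * Real.pi * s2) + (1/2) * varDens q bbar
          + s2 * klDivDens q f) := by
  obtain ⟨hq0, hqi, hq1, hq1i, hq2i, hqm⟩ := hq
  have hA : 0 < 2 * Real.pi * s2 := by positivity
  have hlog : ∀ b : ℝ, Real.log (gauss b s2 y)
      = -(1/2) * Real.log (2 * Real.pi * s2) - (y - b)^2 / (2 * s2) := by
    intro b
    unfold gauss
    rw [Real.log_mul (by positivity) (Real.exp_ne_zero _), Real.log_inv,
      Real.log_sqrt hA.le, Real.log_exp]
    ring
  -- expand ∫ (b - c)^2 q b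
  have expand : ∀ c : ℝ, (∫ b : ℝ, (b - c)^2 * q b)
      = (∫ b : ℝ, b^2 * q b) - 2 * c * bbar + c^2 := by
    intro c
    have heq : (fun b : ℝ => (b - c)^2 * q b)
        = fun b => b^2 * q b - (2*c) * (b * q b) + c^2 * q b := by
      funext b; ring
    have hsub : Integrable (fun b : ℝ => b^2 * q b - 2*c * (b * q b)) :=
      hq2i.sub (hq1i.const_mul (2*c))
    have haddi : Integrable (fun b : ℝ => c^2 * q b) := hqi.const_mul (c^2)
    rw [heq, integral_add hsub haddi,
      integral_sub hq2i (hq1i.const_mul (2*c)), integral_const_mul, integral_const_mul,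
      hqm, hq1]
    ring
  have hI2 : Integrable (fun b : ℝ => (b - y)^2 * q b) := by
    have heq : (fun b : ℝ => (b - y)^2 * q b)
        = fun b => b^2 * q b - (2*y) * (b * q b) + y^2 * q b := by
      funext b; ring
    rw [heq]
    exact (hq2i.sub (hq1i.const_mul (2*y))).add (hqi.const_mul (y^2))
  have hmom : (∫ b : ℝ, (b - y)^2 * q b) = (y - bbar)^2 + varDens q bbar := by
    rw [expand y, show varDens q bbar = (∫ b : ℝ, b^2 * q b) - 2 * bbar * bbar + bbar^2
      from expand bbar]
    ring
  have hmain : (∫ b : ℝ, q b * Real.log (gauss b s2 y))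
      = -(1/2) * Real.log (2 * Real.pi * s2) - (1/(2*s2)) * ((y - bbar)^2 + varDens q bbar) := by
    have heq : (fun b : ℝ => q b * Real.log (gauss b s2 y))
        = fun b => (-(1/2) * Real.log (2 * Real.pi * s2)) * q b
            - (1/(2*s2)) * ((b - y)^2 * q b) := by
      funext b
      rw [hlog b]
      have : (y - b)^2 = (b - y)^2 := by ring
      rw [this]
      field_simp
    rw [heq, integral_sub (hqi.const_mul _) (hI2.const_mul _), integral_const_mul,
      integral_const_mul, hq1, hmom]
    ring
  unfold elboNM
  rw [hmain]
  field_simp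
  ring

/-- the function `h(b̄) = −max_{q : E_q[b] = b̄} F(q)`, where `F`
is the ELBO of the normal means model, can be written as the penalized loss
`h(b̄) = (1/(2s²))(y − b̄)² + (1/s²)ρ(b̄)` with penalty
`ρ(b̄) = min_{q : E_q[b] = b̄} [(s²/2)log(2πs²) + (1/2)Var_q(b) + s²·KL(q ∥ f)]`. -/
theorem stmt_8 (s2 y : ℝ) (hs2 : 0 < s2) (f : ℝ → ℝ)
    (hf_nonneg : ∀ b, 0 ≤ f b) (hf_int : ∫ b : ℝ, f b = 1) (bbar : ℝ) :
    -sSup {F : ℝ | ∃ q : ℝ → ℝ, IsDensWithMean q bbar ∧ F = elboNM y s2 f q} =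
      (1 / (2 * s2)) * (y - bbar)^2 +
        (1 / s2) * sInf {R : ℝ | ∃ q : ℝ → ℝ, IsDensWithMean q bbar ∧
          R = s2 / 2 * Real.log (2 * Real.pi * s2) + (1/2) * varDens q bbar
              + s2 * klDivDens q f} := by
  have hfi : Integrable f := by
    by_contra hc
    rw [integral_undef hc] at hf_int
    norm_num at hf_int
  set S := {F : ℝ | ∃ q : ℝ → ℝ, IsDensWithMean q bbar ∧ F = elboNM y s2 f q} with hS
  set T := {R : ℝ | ∃ q : ℝ → ℝ, IsDensWithMean q bbar ∧
      R = s2 / 2 * Real.log (2 * Real.pi * s2) + (1/2) * varDens q bbar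
          + s2 * klDivDens q f} with hT
  set c := (1 / (2 * s2)) * (y - bbar)^2 with hc
  -- T is nonempty and bounded below
  have hTne : T.Nonempty :=
    ⟨_, gauss bbar 1, gauss_isDens bbar, rfl⟩
  have hTlb : ∀ R ∈ T, s2 / 2 * Real.log (2 * Real.pi * s2) - s2 ≤ R := by
    rintro R ⟨q, hq, rfl⟩
    have hvar : 0 ≤ varDens q bbar :=
      integral_nonneg fun x => mul_nonneg (sq_nonneg _) (hq.1 x)
    have hkl : -1 ≤ klDivDens q f := klDivDens_ge f q hf_nonneg hfi hf_int hq.1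
    nlinarith [hs2]
  have hTbdd : BddBelow T := ⟨_, hTlb⟩
  have hglb : IsGLB T (sInf T) := isGLB_csInf hTne hTbdd
  set m := sInf T with hm
  -- S is the image of T under r ↦ -c - (1/s2) r
  have hlub : IsLUB S (-c - (1/s2) * m) := by
    constructor
    · rintro F ⟨q, hq, rfl⟩
      rw [elbo_decomp s2 y bbar hs2 f q hq]
      have hRT : (s2 / 2 * Real.log (2 * Real.pi * s2) + (1/2) * varDens q bbar
          + s2 * klDivDens q f) ∈ T := ⟨q, hq, rfl⟩
      have hge : m ≤ s2 / 2 * Real.log (2 * Real.pi * s2) + (1/2) * varDens q bbar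
          + s2 * klDivDens q f := hglb.1 hRT
      have := mul_le_mul_of_nonneg_left hge (show (0:ℝ) ≤ 1/s2 by positivity)
      linarith
    · intro u hu
      have hlb : (-(c + u)) * s2 ∈ lowerBounds T := by
        rintro R ⟨q, hq, rfl⟩
        have hFS : elboNM y s2 f q ∈ S := ⟨q, hq, rfl⟩
        have hle : elboNM y s2 f q ≤ u := hu hFS
        rw [elbo_decomp s2 y bbar hs2 f q hq] at hle
        have h1 : (1/s2) * (s2 / 2 * Real.log (2 * Real.pi * s2) + (1/2) * varDens q bbar
            + s2 * klDivDens q f) ≥ -(c + u) := by linarith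
        have h2 := mul_le_mul_of_nonneg_left h1 hs2.le
        rw [show s2 * ((1/s2) * (s2 / 2 * Real.log (2 * Real.pi * s2)
            + (1/2) * varDens q bbar + s2 * klDivDens q f))
            = s2 / 2 * Real.log (2 * Real.pi * s2) + (1/2) * varDens q bbar
              + s2 * klDivDens q f from by field_simp <;> ring] at h2
        linarith [h2]
      have hle : (-(c + u)) * s2 ≤ m := hglb.2 hlb
      have h2 := mul_le_mul_of_nonneg_left hle (show (0:ℝ) ≤ 1/s2 by positivity)
      rw [show (1/s2) * ((-(c + u)) * s2) = -(c + u) from by field_simp <;> ring] at h2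
      linarith
  have hSne : S.Nonempty := ⟨_, gauss bbar 1, gauss_isDens bbar, rfl⟩
  have hsup : sSup S = -c - (1/s2) * m := hlub.csSup_eq hSne
  rw [hsup]
  ring
end
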